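/- arXiv:2310.11233 — 5 statements merged into one kernel-verified Lean document; each statement's English description precedes it below -/
import Mathlib

section
/- Let (ω, γ) be a nearly half-flat SU(3)-structure on a connected 6-manifold (so dω = w₁⁺γ + (3λ/4)Jγ + w₃, dγ = (λ/2)ω², dJγ = −(2/3)w₁⁺ω² + w₂⁻∧ω). Then: (1) if dw₃ = 0 then w₂⁻ = 0 and w₁⁺ is constant; (2) if w₂⁻ = 0 then w₁⁺ is constant. -/
/-- Abstract formulation of Lemma on torsion of nearly half-flat structures on a connected
6-manifold. `A` is the ring of smooth functions (connectedness encoded by: `d0 f = 0`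
implies `f` is a real constant), `Ωk` the form spaces, `d0, d2, d3, d4` the exterior
differentials (`d² = 0`, Leibniz rules for function multiples), `w13, w22, w14` wedge
products, `Ω28 ⊆ Ω²` the module of primitive (1,1)-forms. The nearly half-flat torsion
equations are `dω = w₁⁺γ + (3λ/4)Jγ + w₃`, `dγ = (λ/2)ω²`,
`dJγ = −(2/3)w₁⁺ω² + w₂⁻∧ω`, with `λ ≠ 0`. The components of the `Ω⁴`-decomposition
`Ω¹∧γ ⊕ Ω²₈∧ω` are uniquely determined, and wedging `Ω¹` with `ω²` is injective. Then:
(1) `dw₃ = 0` implies `w₂⁻ = 0` and `w₁⁺` constant; (2) `w₂⁻ = 0` implies `w₁⁺` constant. -/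
theorem stmt3 {A : Type*} [CommRing A] [Algebra ℝ A]
    {Ω1 Ω2 Ω3 Ω4 Ω5 : Type*}
    [AddCommGroup Ω1] [Module ℝ Ω1] [Module A Ω1]
    [AddCommGroup Ω2] [Module ℝ Ω2] [Module A Ω2] [IsScalarTower ℝ A Ω2]
    [AddCommGroup Ω3] [Module ℝ Ω3] [Module A Ω3] [IsScalarTower ℝ A Ω3]
    [AddCommGroup Ω4] [Module ℝ Ω4] [Module A Ω4] [IsScalarTower ℝ A Ω4]
    [AddCommGroup Ω5] [Module ℝ Ω5] [Module A Ω5] [IsScalarTower ℝ A Ω5]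
    (d0 : A →ₗ[ℝ] Ω1) (d2 : Ω2 →ₗ[ℝ] Ω3) (d3 : Ω3 →ₗ[ℝ] Ω4) (d4 : Ω4 →ₗ[ℝ] Ω5)
    (w13 : Ω1 →ₗ[A] Ω3 →ₗ[A] Ω4) (w22 : Ω2 →ₗ[A] Ω2 →ₗ[A] Ω4)
    (w14 : Ω1 →ₗ[A] Ω4 →ₗ[A] Ω5)
    (hd32 : ∀ x : Ω2, d3 (d2 x) = 0) (hd43 : ∀ x : Ω3, d4 (d3 x) = 0)
    (hLeib3 : ∀ (f : A) (x : Ω3), d3 (f • x) = w13 (d0 f) x + f • d3 x)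
    (hLeib4 : ∀ (f : A) (x : Ω4), d4 (f • x) = w14 (d0 f) x + f • d4 x)
    (hconn : ∀ f : A, d0 f = 0 → ∃ c : ℝ, f = algebraMap ℝ A c)
    (lam : ℝ) (hlam : lam ≠ 0)
    (ω : Ω2) (γ Jγ : Ω3)
    (Ω28 : Submodule A Ω2)
    (w1p : A) (w3 : Ω3) (w2m : Ω2) (hw2m : w2m ∈ Ω28)
    (hdω : d2 ω = w1p • γ + algebraMap ℝ A (3*lam/4) • Jγ + w3)
    (hdγ : d3 γ = algebraMap ℝ A (lam/2) • w22 ω ω)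
    (hdJγ : d3 Jγ = -((algebraMap ℝ A (2/3) * w1p) • w22 ω ω) + w22 w2m ω)
    (hdec4 : ∀ (α : Ω1) (β : Ω2), β ∈ Ω28 → w13 α γ + w22 β ω = 0 → α = 0 ∧ β = 0)
    (hinj4 : ∀ α : Ω1, w14 α (w22 ω ω) = 0 → α = 0) :
    (d3 w3 = 0 → w2m = 0 ∧ ∃ c : ℝ, w1p = algebraMap ℝ A c) ∧
    (w2m = 0 → ∃ c : ℝ, w1p = algebraMap ℝ A c) := by
  -- key identity from d3 (d2 ω) = 0
  have hE : w13 (d0 w1p) γ + algebraMap ℝ A (3*lam/4) • w22 w2m ω + d3 w3 = 0 := by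
    have h0 := hd32 ω
    rw [hdω, map_add, map_add, hLeib3, algebraMap_smul, map_smul, hdγ, hdJγ] at h0
    have hsc : algebraMap ℝ A (lam/2) = algebraMap ℝ A (3*lam/4) * algebraMap ℝ A (2/3) := by
      rw [← map_mul]; congr 1; ring
    rw [← h0]
    rw [smul_add, smul_neg, ← algebraMap_smul A (3*lam/4) (((algebraMap ℝ A (2/3)) * w1p) • w22 ω ω),
      smul_smul, smul_smul, ← algebraMap_smul A (3*lam/4) (w22 w2m ω), hsc]
    ring_nf
    abel
  constructor
  · intro hw3
    rw [hw3, add_zero] at hE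
    have hmem : algebraMap ℝ A (3*lam/4) • w2m ∈ Ω28 := Ω28.smul_mem _ hw2m
    have hE' : w13 (d0 w1p) γ + w22 (algebraMap ℝ A (3*lam/4) • w2m) ω = 0 := by
      rw [map_smul, LinearMap.smul_apply]; exact hE
    obtain ⟨h1, h2⟩ := hdec4 _ _ hmem hE'
    constructor
    · have h2' : (3*lam/4 : ℝ) • w2m = 0 := by rwa [algebraMap_smul] at h2
      have hne : (3*lam/4 : ℝ) ≠ 0 := by intro h; apply hlam; linarith
      have h3 := congrArg (fun x => (3*lam/4 : ℝ)⁻¹ • x) h2'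
      simp only [smul_smul, smul_zero] at h3
      rwa [inv_mul_cancel₀ hne, one_smul] at h3
    · exact hconn _ h1
  · intro hw2
    have hE' : w13 (d0 w1p) γ = -(d3 w3) := by
      rw [hw2] at hE
      simp only [map_zero, LinearMap.zero_apply, smul_zero, add_zero] at hE
      exact eq_neg_of_add_eq_zero_left hE
    -- apply d4
    have hkey : d4 (w13 (d0 w1p) γ) = -(algebraMap ℝ A (lam/2) • w14 (d0 w1p) (w22 ω ω)) := by
      have h1 : w13 (d0 w1p) γ = d3 (w1p • γ) - w1p • d3 γ := by
        rw [hLeib3]; abel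
      have hz : d4 ((algebraMap ℝ A (lam/2)) • (w22 ω) ω) = 0 := by
        rw [← hdγ]; exact hd43 γ
      rw [h1, map_sub, hd43, hLeib4, hdγ, hz, smul_zero, add_zero, map_smul, zero_sub]
    rw [hE', map_neg, hd43, neg_zero] at hkey
    have h2 : (lam/2 : ℝ) • w14 (d0 w1p) (w22 ω ω) = 0 := by
      rw [algebraMap_smul] at hkey
      exact (neg_eq_zero.mp hkey.symm)
    have hne : (lam/2 : ℝ) ≠ 0 := by simpa using hlam
    have h3 : w14 (d0 w1p) (w22 ω ω) = 0 := by
      have h4 := congrArg (fun x => (lam/2 : ℝ)⁻¹ • x) h2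
      simp only [smul_smul, smul_zero] at h4
      rwa [inv_mul_cancel₀ hne, one_smul] at h4
    exact hconn _ (hinj4 _ h3)
end

section
/- Let (ω, γ) be a nearly half-flat SU(3)-structure with torsion form w₂⁻ = 0 (hence w₁⁺ is constant). Set θ = arctan(3λ/(4w₁⁺)) when w₁⁺ ≠ 0. Then γ_θ := cos(θ)γ + sin(θ)Jγ satisfies dγ_θ = 0, so (ω, γ_θ) is half-flat. More precisely, for any angle θ, dγ_θ = (cos(θ)λ/2 − (2/3)sin(θ)w₁⁺)ω², which vanishes iff tan(θ) = 3λ/(4w₁⁺). -/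
/-- Abstract formulation: `(ω, γ)` a nearly half-flat SU(3)-structure with `w₂⁻ = 0`
(so that `w₁⁺` is constant), i.e. `dγ = (λ/2)ω²` and `dJγ = −(2/3)w₁⁺ω²`, with `λ ≠ 0`
and `ω² ≠ 0`. Then for every angle `θ`, `γ_θ := cos(θ)γ + sin(θ)Jγ` satisfies
`dγ_θ = (cos(θ)λ/2 − (2/3)sin(θ)w₁⁺)ω²`; for `θ = arctan(3λ/(4w₁⁺))` (when `w₁⁺ ≠ 0`)
one has `dγ_θ = 0`, so `(ω, γ_θ)` is half-flat; and in general `dγ_θ = 0` iff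
`tan θ = 3λ/(4w₁⁺)`. -/
theorem stmt4 {Ω2 Ω3 Ω4 : Type*}
    [AddCommGroup Ω2] [Module ℝ Ω2] [AddCommGroup Ω3] [Module ℝ Ω3]
    [AddCommGroup Ω4] [Module ℝ Ω4]
    (d3 : Ω3 →ₗ[ℝ] Ω4) (w22 : Ω2 →ₗ[ℝ] Ω2 →ₗ[ℝ] Ω4)
    (lam w1p : ℝ) (hlam : lam ≠ 0)
    (ω : Ω2) (γ Jγ : Ω3) (hω2 : w22 ω ω ≠ 0)
    (hdγ : d3 γ = (lam/2) • w22 ω ω)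
    (hdJγ : d3 Jγ = (-(2/3) * w1p) • w22 ω ω) :
    (∀ θ : ℝ, d3 (Real.cos θ • γ + Real.sin θ • Jγ)
        = (Real.cos θ * lam/2 - (2/3) * Real.sin θ * w1p) • w22 ω ω) ∧
    (w1p ≠ 0 →
      d3 (Real.cos (Real.arctan (3*lam/(4*w1p))) • γ
            + Real.sin (Real.arctan (3*lam/(4*w1p))) • Jγ) = 0) ∧
    (w1p ≠ 0 → ∀ θ : ℝ,
      d3 (Real.cos θ • γ + Real.sin θ • Jγ) = 0 ↔ Real.tan θ = 3*lam/(4*w1p)) := by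
  have key : ∀ θ : ℝ, d3 (Real.cos θ • γ + Real.sin θ • Jγ)
      = (Real.cos θ * lam/2 - (2/3) * Real.sin θ * w1p) • w22 ω ω := by
    intro θ
    rw [map_add, map_smul, map_smul, hdγ, hdJγ, smul_smul, smul_smul, ← add_smul]
    ring_nf
  refine ⟨key, ?_, ?_⟩
  · intro hw
    set x := 3*lam/(4*w1p) with hx
    rw [key]
    have hc : Real.cos (Real.arctan x) = 1 / Real.sqrt (1 + x^2) := Real.cos_arctan x
    have hs : Real.sin (Real.arctan x) = x / Real.sqrt (1 + x^2) := Real.sin_arctan x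
    rw [hc, hs]
    have : 1 / Real.sqrt (1 + x^2) * lam / 2 - 2/3 * (x / Real.sqrt (1 + x^2)) * w1p = 0 := by
      rw [hx]
      field_simp
      ring
    rw [this, zero_smul]
  · intro hw θ
    rw [key, smul_eq_zero]
    simp only [hω2, or_false]
    constructor
    · intro h
      have hcos : Real.cos θ ≠ 0 := by
        intro hc
        rw [hc] at h
        have hs : Real.sin θ ≠ 0 := by
          intro hs
          have := Real.sin_sq_add_cos_sq θ
          rw [hs, hc] at this
          norm_num at this
        apply hw
        have : (2/3 : ℝ) * Real.sin θ * w1p = 0 := by linarith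
        rcases mul_eq_zero.mp this with h' | h'
        · rcases mul_eq_zero.mp h' with h'' | h''
          · norm_num at h''
          · exact absurd h'' hs
        · exact h'
      rw [Real.tan_eq_sin_div_cos]
      field_simp
      linarith
    · intro h
      by_cases hcos : Real.cos θ = 0
      · exfalso
        rw [Real.tan_eq_sin_div_cos, hcos, div_zero] at h
        have : (3*lam) / (4*w1p) ≠ 0 := div_ne_zero (by positivity) (by simp [hw])
        exact this h.symm
      · rw [Real.tan_eq_sin_div_cos] at h
        have : Real.sin θ * (4*w1p) = 3*lam * Real.cos θ := by
          field_simp at h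
          linarith [h]
        linarith
end

section
/- Let λ ≠ 0, and take P = p·Id, Q = q·Id with a = b = λp². Then the normalization condition (det P)² = −(ab − tr(Q₁ᵀQ₂))² − 4(a det Q₂ + b det Q₁) + 4 tr(Adj(Q₁ᵀQ₂)) (with Q₁ = Q − (λ/2)Adj(Pᵀ), Q₂ = −Q − (λ/2)Adj(Pᵀ)) holds if and only if q² = p²(12√3|p| − 27λ²p²)/36; this has real nonzero solutions q exactly for 0 < |p| < 4√3/(9λ²). -/
/-!
For scalar `P` and `Q` all matrices involved are scalar: `Q₁ = (q − c)·1` and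
`Q₂ = (−q − c)·1` with `c = λp²/2`, and for `a = b = 2c` the normalization condition collapses
to `p⁶ = 3(q² + 3c²)²`. Both sides being squares of nonnegative quantities, this is
`3(q² + 3c²) = √3·|p|³`, which is linear in `q²`. A nonzero real `q` then exists iff the
resulting value of `q²` is positive, i.e. iff `|p|³(12√3 − 27λ²|p|) > 0`.
-/

open Matrix Real

/-- 3×3 real matrices. -/
abbrev M3 : Type := Matrix (Fin 3) (Fin 3) ℝ

/-- `Q₁ = Q − (λ/2)·Adj(Pᵀ)`. -/
noncomputable def nQ1 (lam : ℝ) (P Q : M3) : M3 := Q - (lam/2) • (Pᵀ).adjugate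

/-- `Q₂ = −Q − (λ/2)·Adj(Pᵀ)`. -/
noncomputable def nQ2 (lam : ℝ) (P Q : M3) : M3 := -Q - (lam/2) • (Pᵀ).adjugate

/-- Normalization condition
`(det P)² = −(ab − tr(Q₁ᵀQ₂))² − 4(a det Q₂ + b det Q₁) + 4 tr(Adj(Q₁ᵀQ₂))`. -/
noncomputable def normCond (a b : ℝ) (P Q1 Q2 : M3) : Prop :=
  P.det^2 = -(a*b - (Q1ᵀ * Q2).trace)^2 - 4*(a * Q2.det + b * Q1.det)
              + 4*((Q1ᵀ * Q2).adjugate.trace)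

/-- `A = a·tr(Q₁ᵀQ₂) − 2 det Q₁ − a²b`. -/
noncomputable def torA (a b : ℝ) (Q1 Q2 : M3) : ℝ :=
  a * (Q1ᵀ * Q2).trace - 2 * Q1.det - a^2 * b

/-- `B = −(b·tr(Q₁ᵀQ₂) − 2 det Q₂ − ab²)`. -/
noncomputable def torB (a b : ℝ) (Q1 Q2 : M3) : ℝ :=
  -(b * (Q1ᵀ * Q2).trace - 2 * Q2.det - a * b^2)

/-- `R₁ = −((ab + tr(Q₁ᵀQ₂))Q₁ − 2a·Adj(Q₂ᵀ) − 2Q₁Q₂ᵀQ₁)`. -/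
noncomputable def torR1 (a b : ℝ) (Q1 Q2 : M3) : M3 :=
  -((a*b + (Q1ᵀ * Q2).trace) • Q1 - (2*a) • (Q2ᵀ).adjugate - (2:ℝ) • (Q1 * Q2ᵀ * Q1))

/-- `R₂ = (ab + tr(Q₁ᵀQ₂))Q₂ − 2b·Adj(Q₁ᵀ) − 2Q₂Q₁ᵀQ₂`. -/
noncomputable def torR2 (a b : ℝ) (Q1 Q2 : M3) : M3 :=
  (a*b + (Q1ᵀ * Q2).trace) • Q2 - (2*b) • (Q1ᵀ).adjugate - (2:ℝ) • (Q2 * Q1ᵀ * Q2)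

/-- `R = (ab + tr(Q₁ᵀQ₂))(Q₂ − Q₁) − 2(b·Adj(Q₂ᵀ) − a·Adj(Q₁ᵀ)) − 2Q₂Q₁ᵀQ₂ + 2Q₁Q₂ᵀQ₁`. -/
noncomputable def torR (a b : ℝ) (Q1 Q2 : M3) : M3 :=
  (a*b + (Q1ᵀ * Q2).trace) • (Q2 - Q1)
    - (2:ℝ) • (b • (Q2ᵀ).adjugate - a • (Q1ᵀ).adjugate)
    - (2:ℝ) • (Q2 * Q1ᵀ * Q2) + (2:ℝ) • (Q1 * Q2ᵀ * Q1)

lemma adjugate_transpose_smul_one (p : ℝ) : ((p • (1 : M3))ᵀ).adjugate = (p ^ 2) • 1 := by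
  simp [adjugate_smul]

lemma nQ1_smul_one (lam p q : ℝ) :
    nQ1 lam (p • 1) (q • 1) = (q - lam * p ^ 2 / 2) • (1 : M3) := by
  rw [nQ1, adjugate_transpose_smul_one, smul_smul, ← sub_smul]
  ring_nf

lemma nQ2_smul_one (lam p q : ℝ) :
    nQ2 lam (p • 1) (q • 1) = (-q - lam * p ^ 2 / 2) • (1 : M3) := by
  rw [nQ2, adjugate_transpose_smul_one, smul_smul, ← neg_smul, ← sub_smul]
  ring_nf

lemma normCond_smul_one (a b s x y : ℝ) :
    normCond a b (s • 1) (x • 1) (y • 1) ↔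
      s ^ 6 = -(a * b - 3 * (x * y)) ^ 2 - 4 * (a * y ^ 3 + b * x ^ 3) + 12 * (x * y) ^ 2 := by
  have hprod : (x • (1 : M3))ᵀ * (y • 1) = (x * y) • 1 := by
    simp [smul_smul, mul_comm]
  rw [normCond, hprod]
  simp [adjugate_smul, trace_smul]
  ring_nf

lemma normCond_smul_one_iff (lam p q : ℝ) :
    normCond (lam * p ^ 2) (lam * p ^ 2) (p • 1)
        (nQ1 lam (p • 1) (q • 1)) (nQ2 lam (p • 1) (q • 1)) ↔
      p ^ 6 = 3 * (q ^ 2 + 3 * (lam * p ^ 2 / 2) ^ 2) ^ 2 := by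
  rw [nQ1_smul_one, nQ2_smul_one, normCond_smul_one]
  congr! 1
  ring

lemma pow_six_eq_three_mul_sq_iff {u : ℝ} (hu : 0 ≤ u) (p : ℝ) :
    p ^ 6 = 3 * u ^ 2 ↔ 3 * u = √3 * |p| ^ 3 := by
  have hsq : (√3 * |p| ^ 3) ^ 2 = 3 * p ^ 6 := by
    rw [mul_pow, sq_sqrt zero_le_three, ← pow_mul, ← abs_pow,
      abs_of_nonneg (Even.pow_nonneg ⟨3, rfl⟩ p), mul_comm]
  rw [← sq_eq_sq₀ (a := 3 * u) (by positivity) (by positivity), hsq]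
  constructor
  · intro h
    linear_combination (-3 : ℝ) * h
  · intro h
    linear_combination (-1/3 : ℝ) * h

lemma exists_ne_zero_sq_eq_iff (T : ℝ) : (∃ q : ℝ, q ≠ 0 ∧ q ^ 2 = T) ↔ 0 < T := by
  constructor
  · rintro ⟨q, hq, rfl⟩
    positivity
  · intro hT
    exact ⟨√T, (sqrt_pos.mpr hT).ne', sq_sqrt hT.le⟩

lemma sq_mul_sub_pos_iff {t k : ℝ} (ht : 0 ≤ t) (hk : 0 < k) (m : ℝ) :
    0 < t ^ 2 * (m * t - k * t ^ 2) ↔ 0 < t ∧ t < m / k := by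
  rw [lt_div_iff₀ hk, show t ^ 2 * (m * t - k * t ^ 2) = t ^ 3 * (m - t * k) by ring]
  constructor
  · intro h
    have htpos : 0 < t := ht.lt_of_ne (by rintro rfl; simp at h)
    exact ⟨htpos, by nlinarith [pow_pos htpos 3]⟩
  · rintro ⟨htpos, hlt⟩
    exact mul_pos (pow_pos htpos 3) (by linarith)

/-- With `P = p·Id`, `Q = q·Id`, `a = b = λp²` (and `λ ≠ 0`), the normalization condition
holds iff `q² = p²(12√3|p| − 27λ²p²)/36`, and a real nonzero solution `q` exists exactly for
`0 < |p| < 4√3/(9λ²)`. -/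
theorem stmt11 (lam p : ℝ) (hlam : lam ≠ 0) :
    (∀ q : ℝ,
      normCond (lam*p^2) (lam*p^2) (p • (1 : M3))
        (nQ1 lam (p • (1 : M3)) (q • (1 : M3)))
        (nQ2 lam (p • (1 : M3)) (q • (1 : M3)))
      ↔ q^2 = p^2 * (12*Real.sqrt 3*|p| - 27*lam^2*p^2) / 36) ∧
    ((∃ q : ℝ, q ≠ 0 ∧ q^2 = p^2 * (12*Real.sqrt 3*|p| - 27*lam^2*p^2) / 36)
      ↔ (0 < |p| ∧ |p| < 4*Real.sqrt 3/(9*lam^2))) := by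
  have habs : |p| ^ 3 = p ^ 2 * |p| := by rw [pow_succ, sq_abs]
  refine ⟨fun q => ?_, ?_⟩
  · rw [normCond_smul_one_iff, pow_six_eq_three_mul_sq_iff (by positivity), habs]
    constructor
    · intro h
      linear_combination h / 3
    · intro h
      linear_combination 3 * h
  · have hbound : 4 * √3 / (9 * lam ^ 2) = 12 * √3 / (27 * lam ^ 2) := by
      field_simp
      ring
    rw [exists_ne_zero_sq_eq_iff, div_pos_iff_of_pos_right (by norm_num), ← sq_abs p,
      sq_mul_sub_pos_iff (abs_nonneg p) (by positivity), hbound]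
end

section
/- With a(t) = 4p(t)², P = p·Id, Q = q·Id and λ = 4, the normalization condition for an invariant nearly half-flat structure on S³×S³ reduces to a polynomial equation in p, q solved exactly by q = ±p·√(−108p² ± 3√3·p)/3 (when the radicand is nonnegative). -/
open Matrix Real

lemma adjTraceNegSmulOne (c : ℝ) : ((-(c • (1:M3))).adjugate).trace = 3 * c^2 := by
  rw [← neg_smul, Matrix.adjugate_smul, Matrix.adjugate_one, Matrix.trace_smul,
    Matrix.trace_one]
  simp; ring

lemma keyScalar (p q : ℝ) : p^6 - 432*p^8 - 72*p^4*q^2 - 3*q^4 = 0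
    ↔ ∃ s1 s2 : ℝ, (s1 = 1 ∨ s1 = -1) ∧ (s2 = 1 ∨ s2 = -1) ∧
        0 ≤ -108*p^2 + s2*(3*Real.sqrt 3*p) ∧
        q = s1*p*Real.sqrt (-108*p^2 + s2*(3*Real.sqrt 3*p))/3 := by
  have h3 : Real.sqrt 3 ^ 2 = 3 := Real.sq_sqrt (by norm_num)
  constructor
  · intro h
    have hsq : (q^2 + 12*p^4 - Real.sqrt 3 * p^3/3) * (q^2 + 12*p^4 + Real.sqrt 3 * p^3/3) = 0 := by
      linear_combination (-1/3)*h - (p^6/9)*h3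
    have key2 : ∃ s2 : ℝ, (s2 = 1 ∨ s2 = -1) ∧ q^2 + 12*p^4 = s2 * Real.sqrt 3 * p^3/3 := by
      rcases mul_eq_zero.1 hsq with h1 | h1
      · exact ⟨1, Or.inl rfl, by linarith⟩
      · exact ⟨-1, Or.inr rfl, by linarith⟩
    obtain ⟨s2, hs2, hq2⟩ := key2
    set r : ℝ := -108*p^2 + s2*(3*Real.sqrt 3*p) with hr
    have hpr : p^2 * r = 9 * q^2 := by rw [hr]; nlinarith [hq2]
    have hrn : 0 ≤ r := by
      rcases eq_or_ne p 0 with hp | hp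
      · rw [hr, hp]; ring_nf; positivity
      · have hp2 : 0 < p^2 := by positivity
        by_contra hc
        push_neg at hc
        nlinarith [mul_pos hp2 (by linarith : 0 < -r), sq_nonneg q]
    have hsr : Real.sqrt r ^ 2 = r := Real.sq_sqrt hrn
    have : (q - p * Real.sqrt r / 3) * (q + p * Real.sqrt r / 3) = 0 := by
      linear_combination (-1/9)*hpr - (p^2/9)*hsr
    rcases mul_eq_zero.1 this with h1 | h1
    · exact ⟨1, s2, Or.inl rfl, hs2, hrn, by linarith⟩
    · exact ⟨-1, s2, Or.inr rfl, hs2, hrn, by linarith⟩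
  · rintro ⟨s1, s2, hs1, hs2, hrn, hq⟩
    set r : ℝ := -108*p^2 + s2*(3*Real.sqrt 3*p) with hr
    have hsr : Real.sqrt r ^ 2 = r := Real.sq_sqrt hrn
    have hs1sq : s1^2 = 1 := by rcases hs1 with rfl | rfl <;> norm_num
    have hs2sq : s2^2 = 1 := by rcases hs2 with rfl | rfl <;> norm_num
    have hq2 : q^2 = p^2 * r / 9 := by
      rw [hq]
      linear_combination (p^2*(Real.sqrt r)^2/9)*hs1sq + (p^2/9)*hsr
    have hrx : r = -108*p^2 + s2*(3*Real.sqrt 3*p) := hr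
    linear_combination (-72*p^4 - 3*(q^2 + p^2*r/9)) * hq2
      + (-(Real.sqrt 3^2)/3*p^6) * hs2sq + (-p^6/3) * h3
      + (-8*p^6 - p^4*(r + (-108*p^2 + s2*(3*Real.sqrt 3*p)))/27) * hrx

/-- With `a = b = 4p²`, `P = p·Id`, `Q = q·Id` and `λ = 4` (so `Q₁ = (q−2p²)Id`,
`Q₂ = −(q+2p²)Id`), the normalization condition holds exactly for
`q = ±p·√(−108p² ± 3√3·p)/3` (when the radicand is nonnegative). -/
theorem stmt14 (p q : ℝ) :
    normCond (4*p^2) (4*p^2) (p • (1 : M3))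
        ((q - 2*p^2) • (1 : M3)) (-((q + 2*p^2) • (1 : M3)))
    ↔ ∃ s1 s2 : ℝ, (s1 = 1 ∨ s1 = -1) ∧ (s2 = 1 ∨ s2 = -1) ∧
        0 ≤ -108*p^2 + s2*(3*Real.sqrt 3*p) ∧
        q = s1*p*Real.sqrt (-108*p^2 + s2*(3*Real.sqrt 3*p))/3 := by
  have hpoly : normCond (4*p^2) (4*p^2) (p • (1 : M3))
      ((q - 2*p^2) • (1 : M3)) (-((q + 2*p^2) • (1 : M3)))
      ↔ p^6 - 432*p^8 - 72*p^4*q^2 - 3*q^4 = 0 := by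
    unfold normCond
    simp [Matrix.det_smul, Matrix.transpose_smul, Matrix.smul_mul, Matrix.mul_smul,
      Matrix.adjugate_smul, Matrix.trace_smul, Matrix.trace_one, Matrix.det_neg,
      Matrix.det_one, Fin.prod_univ_succ, smul_smul, adjTraceNegSmulOne]
    constructor <;> intro h <;> nlinarith [h]
  rw [hpoly]
  exact keyScalar p q
end

section
/- Suppose on an interval the nearly-G₂ evolution and nearly half-flat conditions hold with P = p(t)Id, Q = q(t)Id, a(t) = b(t), λ = 4. Vanishing of the e^{135} − e^{246} component of γ' − dω + 4Jγ is equivalent to (a − 4p²)·((a + 2p²)² + 3q²) = 0 (up to the nonzero factor 16/p³), and the factor (a + 2p²)² + 3q² = 0 is incompatible with the normalization condition unless p = 0; hence a = 4p². -/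
open Matrix Real

/-- With `P = p·Id`, `Q = q·Id`, `a = b`, `λ = 4` (so `Q₁ = (q−2p²)Id`, `Q₂ = −(q+2p²)Id`),
the `e¹³⁵ − e²⁴⁶` component of `γ' − dω + 4Jγ`, namely `(8/p³)(A − B)`, vanishes iff
`(a − 4p²)((a + 2p²)² + 3q²) = 0`; the factor `(a + 2p²)² + 3q² = 0` is incompatible with the
normalization condition unless `p = 0`; hence (for `p ≠ 0`) `a = 4p²`. -/
theorem stmt18 (p q a : ℝ) :
    (p ≠ 0 →
      ((8/p^3) * (torA a a ((q - 2*p^2) • (1 : M3)) (-((q + 2*p^2) • (1 : M3)))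
          - torB a a ((q - 2*p^2) • (1 : M3)) (-((q + 2*p^2) • (1 : M3)))) = 0
        ↔ (a - 4*p^2) * ((a + 2*p^2)^2 + 3*q^2) = 0)) ∧
    (((a + 2*p^2)^2 + 3*q^2 = 0 ∧
        normCond a a (p • (1 : M3)) ((q - 2*p^2) • (1 : M3)) (-((q + 2*p^2) • (1 : M3))))
      → p = 0) ∧
    ((p ≠ 0 ∧
        (8/p^3) * (torA a a ((q - 2*p^2) • (1 : M3)) (-((q + 2*p^2) • (1 : M3)))
          - torB a a ((q - 2*p^2) • (1 : M3)) (-((q + 2*p^2) • (1 : M3)))) = 0 ∧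
        normCond a a (p • (1 : M3)) ((q - 2*p^2) • (1 : M3)) (-((q + 2*p^2) • (1 : M3))))
      → a = 4*p^2) := by
  have key : torA a a ((q - 2*p^2) • (1 : M3)) (-((q + 2*p^2) • (1 : M3)))
      - torB a a ((q - 2*p^2) • (1 : M3)) (-((q + 2*p^2) • (1 : M3)))
      = -2 * ((a - 4*p^2) * ((a + 2*p^2)^2 + 3*q^2)) := by
    unfold torA torB
    simp [← neg_smul, Matrix.smul_mul, Matrix.mul_smul, smul_smul,
      Matrix.trace_smul, Matrix.trace_one, Matrix.det_smul]
    ring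
  have hnorm : normCond a a (p • (1 : M3)) ((q - 2*p^2) • (1 : M3))
      (-((q + 2*p^2) • (1 : M3))) ↔
      p^6 = -(a^2 + 3*(q^2 - 4*p^4))^2 + 16*a*p^2*(3*q^2 + 4*p^4)
        + 12*(q^2 - 4*p^4)^2 := by
    unfold normCond
    simp [← neg_smul, Matrix.smul_mul, Matrix.mul_smul, smul_smul,
      Matrix.trace_smul, Matrix.trace_one, Matrix.det_smul, Matrix.adjugate_smul]
    constructor <;> intro h <;> linear_combination h
  have part1 : p ≠ 0 →
      ((8/p^3) * (torA a a ((q - 2*p^2) • (1 : M3)) (-((q + 2*p^2) • (1 : M3)))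
          - torB a a ((q - 2*p^2) • (1 : M3)) (-((q + 2*p^2) • (1 : M3)))) = 0
        ↔ (a - 4*p^2) * ((a + 2*p^2)^2 + 3*q^2) = 0) := by
    intro hp
    rw [key]
    constructor
    · intro h
      have h8 : (8:ℝ)/p^3 ≠ 0 := div_ne_zero (by norm_num) (pow_ne_zero 3 hp)
      rcases mul_eq_zero.1 h with h | h
      · exact absurd h h8
      · linarith
    · intro h; rw [h]; ring
  have part2 : ((a + 2*p^2)^2 + 3*q^2 = 0 ∧
      normCond a a (p • (1 : M3)) ((q - 2*p^2) • (1 : M3)) (-((q + 2*p^2) • (1 : M3))))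
      → p = 0 := by
    rintro ⟨h1, h2⟩
    rw [hnorm] at h2
    have hq : q = 0 := by nlinarith [sq_nonneg (a + 2*p^2), sq_nonneg q]
    have ha : a = -2*p^2 := by nlinarith [sq_nonneg (a + 2*p^2), sq_nonneg q]
    subst hq; subst ha
    have hp6 : p^6 = 0 := by linear_combination h2
    exact pow_eq_zero_iff (by norm_num : (6:ℕ) ≠ 0) |>.1 hp6
  refine ⟨part1, part2, ?_⟩
  rintro ⟨hp, hz, hn⟩
  have h := (part1 hp).1 hz
  rcases mul_eq_zero.1 h with h | h
  · linarith
  · exact absurd (part2 ⟨h, hn⟩) hp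
end
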